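/- arXiv:1903.00873 — 3 statements merged into one kernel-verified Lean document; each statement's English description precedes it below -/
import Mathlib

section
/- Let n ≥ 1, let A : [0,∞) → ℝ^{n×n} be a continuous matrix-valued function, and suppose that ∫₀^t μ₂[A(s)] ds → -∞ as t → ∞. Then every solution x : [0,∞) → ℝⁿ of the linear time-varying system ẋ(t) = A(t)x(t) satisfies ‖x(t)‖₂ → 0 as t → ∞ (so the equilibrium x = 0 is globally attractive). -/
open Filter Matrix

lemma add_transpose_isHermitian {n : ℕ} (A : Matrix (Fin n) (Fin n) ℝ) :
    (A + Aᵀ).IsHermitian := by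
  ext i j
  simp [Matrix.conjTranspose_apply, Matrix.transpose_apply, add_comm]

/-- The largest eigenvalue of a real symmetric matrix. -/
noncomputable def lambdaMax {n : ℕ} (M : Matrix (Fin n) (Fin n) ℝ) (hM : M.IsHermitian) : ℝ :=
  ⨆ i, hM.eigenvalues i

/-- The Euclidean logarithmic norm `μ₂[A] = (1/2)·λ_max(A + Aᵀ)`. -/
noncomputable def mu2 {n : ℕ} (A : Matrix (Fin n) (Fin n) ℝ) : ℝ :=
  (1 / 2) * lambdaMax (A + Aᵀ) (add_transpose_isHermitian A)

/-!
Along a solution, `d/dt ‖x‖² = 2⟪x, A x⟫ ≤ 2 μ₂[A] ‖x‖²`: indeed `⟪v, A v⟫ = ½⟪v, (A + Aᵀ) v⟫`,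
and the Rayleigh quotient of the symmetric matrix `A + Aᵀ` is at most its largest eigenvalue.
Hence `‖x t‖² · exp (-2 ∫₀ᵗ μ₂[A])` is nonincreasing, so `‖x t‖ ≤ ‖x 0‖ · exp (∫₀ᵗ μ₂[A]) → 0`.
Differentiating the integral needs `μ₂` to be continuous, which holds because `μ₂[A]` is the
maximum of the jointly continuous `⟪v, A v⟫` over the compact unit sphere.
-/

open RealInnerProductSpace Metric Set Real

namespace Matrix.IsHermitian

variable {n : ℕ} {M : Matrix (Fin n) (Fin n) ℝ} (hM : M.IsHermitian)

lemma toEuclideanLin_eigenvectorBasis (i : Fin n) :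
    toEuclideanLin M (hM.eigenvectorBasis i) = hM.eigenvalues i • hM.eigenvectorBasis i :=
  congrArg (WithLp.toLp 2) (hM.mulVec_eigenvectorBasis i)

lemma eigenvalues_le_lambdaMax (i : Fin n) : hM.eigenvalues i ≤ lambdaMax M hM :=
  le_ciSup (finite_range _).bddAbove i

lemma inner_toEuclideanLin_le_lambdaMax (v : EuclideanSpace ℝ (Fin n)) :
    ⟪v, toEuclideanLin M v⟫ ≤ lambdaMax M hM * ‖v‖ ^ 2 := by
  set b := hM.eigenvectorBasis
  have hsymm := isSymmetric_toEuclideanLin_iff.2 hM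
  calc ⟪v, toEuclideanLin M v⟫ = ∑ i, hM.eigenvalues i * ⟪b i, v⟫ ^ 2 := by
        rw [← b.sum_inner_mul_inner]
        refine Finset.sum_congr rfl fun i _ => ?_
        rw [← hsymm, hM.toEuclideanLin_eigenvectorBasis, real_inner_smul_left, real_inner_comm]
        ring
    _ ≤ ∑ i, lambdaMax M hM * ⟪b i, v⟫ ^ 2 := by
        gcongr with i
        exact hM.eigenvalues_le_lambdaMax i
    _ = lambdaMax M hM * ‖v‖ ^ 2 := by rw [← Finset.mul_sum, b.sum_sq_inner_right]

lemma exists_inner_toEuclideanLin_eq_lambdaMax [Nonempty (Fin n)] :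
    ∃ v ∈ sphere (0 : EuclideanSpace ℝ (Fin n)) 1, ⟪v, toEuclideanLin M v⟫ = lambdaMax M hM := by
  obtain ⟨i, hi⟩ := Finite.exists_max hM.eigenvalues
  have hunit : ‖hM.eigenvectorBasis i‖ = 1 := hM.eigenvectorBasis.orthonormal.1 i
  refine ⟨hM.eigenvectorBasis i, by simp [hunit], ?_⟩
  rw [hM.toEuclideanLin_eigenvectorBasis, real_inner_smul_right, real_inner_self_eq_norm_sq,
    hunit, one_pow, mul_one]
  exact le_antisymm (hM.eigenvalues_le_lambdaMax i) (ciSup_le hi)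

end Matrix.IsHermitian

lemma inner_toEuclideanLin_transpose {n : ℕ} (A : Matrix (Fin n) (Fin n) ℝ)
    (v : EuclideanSpace ℝ (Fin n)) :
    ⟪v, toEuclideanLin Aᵀ v⟫ = ⟪v, toEuclideanLin A v⟫ := by
  rw [← conjTranspose_eq_transpose_of_trivial, toEuclideanLin_conjTranspose_eq_adjoint,
    LinearMap.adjoint_inner_right, real_inner_comm]

lemma inner_toEuclideanLin_add_transpose {n : ℕ} (A : Matrix (Fin n) (Fin n) ℝ)
    (v : EuclideanSpace ℝ (Fin n)) :
    ⟪v, toEuclideanLin (A + Aᵀ) v⟫ = 2 * ⟪v, toEuclideanLin A v⟫ := by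
  rw [map_add, LinearMap.add_apply, inner_add_right, inner_toEuclideanLin_transpose, two_mul]

lemma inner_toEuclideanLin_le_mu2 {n : ℕ} (A : Matrix (Fin n) (Fin n) ℝ)
    (v : EuclideanSpace ℝ (Fin n)) :
    ⟪v, toEuclideanLin A v⟫ ≤ mu2 A * ‖v‖ ^ 2 := by
  have := (add_transpose_isHermitian A).inner_toEuclideanLin_le_lambdaMax v
  rw [inner_toEuclideanLin_add_transpose] at this
  rw [mu2]
  linarith

lemma isGreatest_mu2 {n : ℕ} [Nonempty (Fin n)] (A : Matrix (Fin n) (Fin n) ℝ) :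
    IsGreatest ((fun v => ⟪v, toEuclideanLin A v⟫) '' sphere 0 1) (mu2 A) := by
  obtain ⟨v, hv, hmax⟩ := (add_transpose_isHermitian A).exists_inner_toEuclideanLin_eq_lambdaMax
  refine ⟨⟨v, hv, ?_⟩, ?_⟩
  · rw [mu2, ← hmax, inner_toEuclideanLin_add_transpose]
    ring
  · rintro _ ⟨u, hu, rfl⟩
    simpa [mem_sphere_zero_iff_norm.1 hu] using inner_toEuclideanLin_le_mu2 A u

lemma continuous_mu2 {n : ℕ} : Continuous (mu2 : Matrix (Fin n) (Fin n) ℝ → ℝ) := by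
  cases isEmpty_or_nonempty (Fin n)
  · exact continuous_of_const fun A B => by rw [Subsingleton.elim A B]
  have hsSup : mu2 = fun A : Matrix (Fin n) (Fin n) ℝ =>
      sSup ((fun v => ⟪v, toEuclideanLin A v⟫) '' sphere 0 1) :=
    funext fun A => (isGreatest_mu2 A).csSup_eq.symm
  rw [hsSup]
  exact (isCompact_sphere 0 1).continuous_sSup <| continuous_snd.inner <|
    (PiLp.continuous_toLp 2 _).comp <|
      continuous_fst.matrix_mulVec ((PiLp.continuous_ofLp 2 _).comp continuous_snd)

section

variable {E : Type*} [NormedAddCommGroup E] [InnerProductSpace ℝ E] {x x' : ℝ → E} {c : ℝ → ℝ}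

lemma antitoneOn_norm_sq_mul_exp_neg_integral (hc : Continuous c)
    (hx : ∀ t, 0 ≤ t → HasDerivAt x (x' t) t)
    (hle : ∀ t, 0 ≤ t → ⟪x t, x' t⟫ ≤ c t * ‖x t‖ ^ 2) :
    AntitoneOn (fun t => ‖x t‖ ^ 2 * exp (-2 * ∫ s in 0..t, c s)) (Ici 0) := by
  have hderiv : ∀ t, 0 ≤ t → HasDerivAt (fun t => ‖x t‖ ^ 2 * exp (-2 * ∫ s in 0..t, c s))
      (2 * ⟪x t, x' t⟫ * exp (-2 * ∫ s in 0..t, c s)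
        + ‖x t‖ ^ 2 * (exp (-2 * ∫ s in 0..t, c s) * (-2 * c t))) t := fun t ht =>
    (hx t ht).norm_sq.mul (((hc.integral_hasStrictDerivAt 0 t).hasDerivAt.const_mul (-2)).exp)
  refine antitoneOn_of_hasDerivWithinAt_nonpos (convex_Ici 0)
    (fun t ht => (hderiv t ht).continuousAt.continuousWithinAt)
    (fun t ht => (hderiv t (interior_subset ht)).hasDerivWithinAt) fun t ht => ?_
  have ht : 0 ≤ t := interior_subset ht
  have hexp := (exp_pos (-2 * ∫ s in 0..t, c s)).le
  nlinarith [hle t ht]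

lemma norm_le_mul_exp_integral (hc : Continuous c)
    (hx : ∀ t, 0 ≤ t → HasDerivAt x (x' t) t)
    (hle : ∀ t, 0 ≤ t → ⟪x t, x' t⟫ ≤ c t * ‖x t‖ ^ 2) {t : ℝ} (ht : 0 ≤ t) :
    ‖x t‖ ≤ ‖x 0‖ * exp (∫ s in 0..t, c s) := by
  have hmono := antitoneOn_norm_sq_mul_exp_neg_integral hc hx hle self_mem_Ici ht ht
  simp only [intervalIntegral.integral_same, mul_zero, exp_zero, mul_one] at hmono
  set I := ∫ s in 0..t, c s
  have hcancel : exp (-2 * I) * exp I ^ 2 = 1 := by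
    rw [sq, ← exp_add, ← exp_add, show -2 * I + (I + I) = 0 by ring, exp_zero]
  have hsq : ‖x t‖ ^ 2 ≤ (‖x 0‖ * exp I) ^ 2 :=
    calc ‖x t‖ ^ 2 = ‖x t‖ ^ 2 * exp (-2 * I) * exp I ^ 2 := by rw [mul_assoc, hcancel, mul_one]
      _ ≤ ‖x 0‖ ^ 2 * exp I ^ 2 := by gcongr
      _ = (‖x 0‖ * exp I) ^ 2 := (mul_pow _ _ _).symm
  exact (pow_le_pow_iff_left₀ (norm_nonneg _) (by positivity) two_ne_zero).1 hsq

lemma tendsto_norm_zero_of_inner_le (hc : Continuous c)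
    (hI : Tendsto (fun t => ∫ s in 0..t, c s) atTop atBot)
    (hx : ∀ t, 0 ≤ t → HasDerivAt x (x' t) t)
    (hle : ∀ t, 0 ≤ t → ⟪x t, x' t⟫ ≤ c t * ‖x t‖ ^ 2) :
    Tendsto (fun t => ‖x t‖) atTop (nhds 0) := by
  have hbound : Tendsto (fun t => ‖x 0‖ * exp (∫ s in 0..t, c s)) atTop (nhds 0) := by
    simpa using (tendsto_exp_atBot.comp hI).const_mul ‖x 0‖
  exact squeeze_zero' (.of_forall fun t => norm_nonneg _)
    ((eventually_ge_atTop 0).mono fun t ht => norm_le_mul_exp_integral hc hx hle ht) hbound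

end

theorem stmt_0_general (n : ℕ)
    (A : ℝ → Matrix (Fin n) (Fin n) ℝ)
    (hA : ContinuousOn A (Set.Ici (0 : ℝ)))
    (hμ : Tendsto (fun t : ℝ => ∫ s in (0:ℝ)..t, mu2 (A s)) atTop atBot)
    (x : ℝ → EuclideanSpace ℝ (Fin n))
    (hx : ∀ t : ℝ, 0 ≤ t → HasDerivAt x (Matrix.toEuclideanLin (A t) (x t)) t) :
    Tendsto (fun t : ℝ => ‖x t‖) atTop (nhds 0) := by
  -- `A` is only continuous on `[0, ∞)`; freezing it at `A 0` for negative times makes the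
  -- integrand continuous on all of `ℝ`.
  set c : ℝ → ℝ := fun t => mu2 (A (max t 0))
  have hc : Continuous c := continuous_mu2.comp <|
    hA.comp_continuous (continuous_id.max continuous_const) fun t => le_max_right t 0
  have hcA : ∀ t, 0 ≤ t → c t = mu2 (A t) := fun t ht => by simp only [c, max_eq_left ht]
  have hI : Tendsto (fun t => ∫ s in 0..t, c s) atTop atBot := by
    refine hμ.congr' ((eventually_ge_atTop 0).mono fun t ht => ?_)
    refine intervalIntegral.integral_congr fun s hs => (hcA s ?_).symm
    exact (uIcc_of_le ht ▸ hs).1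
  exact tendsto_norm_zero_of_inner_le hc hI hx fun t ht =>
    hcA t ht ▸ inner_toEuclideanLin_le_mu2 (A t) (x t)

/-- if `∫₀ᵗ μ₂[A(s)] ds → -∞`, then every solution of `ẋ = A(t)x`
tends to `0` in the Euclidean norm. -/
theorem stmt_0 (n : ℕ) (hn : 1 ≤ n)
    (A : ℝ → Matrix (Fin n) (Fin n) ℝ)
    (hA : ContinuousOn A (Set.Ici (0 : ℝ)))
    (hμ : Tendsto (fun t : ℝ => ∫ s in (0:ℝ)..t, mu2 (A s)) atTop atBot)
    (x : ℝ → EuclideanSpace ℝ (Fin n))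
    (hx : ∀ t : ℝ, 0 ≤ t → HasDerivAt x (Matrix.toEuclideanLin (A t) (x t)) t) :
    Tendsto (fun t : ℝ => ‖x t‖) atTop (nhds 0) :=
  stmt_0_general n A hA hμ x hx
end

section
/- Let μ : [0,∞) → ℝ and g : [0,∞) → [0,∞) be continuous functions such that (1) ∫₀^t μ(s) ds → -∞ as t → ∞; (2) there exists T ≥ 0 with μ(t) < 0 for all t ≥ T; and (3) g(t)/μ(t) → 0 as t → ∞. Then ∫₀^t exp(∫_τ^t μ(s) ds) · g(τ) dτ → 0 as t → ∞. -/
/-!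
After replacing `μ` and `g` by `s ↦ μ (max 0 s)` and `s ↦ g (max 0 s)` we may assume both are
continuous on `ℝ`. Write `F t = ∫₀ᵗ μ`. The convolution term is
`e^{F t} ∫₀ᵗ e^{-F} g = (∫₀ᵗ e^{-F} g) / e^{-F t}`, and `e^{-F t} - 1 = ∫₀ᵗ (-μ) e^{-F}` is the
integral of a weight that is eventually nonnegative and tends to `∞`. Since
`e^{-F} g = o((-μ) e^{-F})`, the integral form of L'Hospital's rule (integrating a little-o
relation against a weight whose integral diverges keeps it little-o) gives the claim.
-/

open Filter Asymptotics intervalIntegral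

theorem intervalIntegral.integral_comp_max_of_le {E : Type*} [NormedAddCommGroup E]
    [NormedSpace ℝ E] (f : ℝ → E) {a b c : ℝ} (hb : a ≤ b) (hc : a ≤ c) :
    ∫ x in b..c, f (max a x) = ∫ x in b..c, f x :=
  integral_congr fun x hx => by rw [max_eq_right (le_trans (le_min hb hc) hx.1)]

theorem Asymptotics.IsLittleO.intervalIntegral_atTop {E : Type*} [NormedAddCommGroup E]
    [NormedSpace ℝ E] {f : ℝ → E} {w : ℝ → ℝ} {a : ℝ}
    (hf : ∀ b c, IntervalIntegrable f MeasureTheory.volume b c)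
    (hw : ∀ b c, IntervalIntegrable w MeasureTheory.volume b c)
    (hfw : f =o[atTop] w) (hw0 : ∀ᶠ x in atTop, 0 ≤ w x)
    (hW : Tendsto (fun t => ∫ x in a..t, w x) atTop atTop) :
    (fun t => ∫ x in a..t, f x) =o[atTop] fun t => ∫ x in a..t, w x := by
  refine isLittleO_iff.2 fun c hc => ?_
  obtain ⟨T, hT⟩ := eventually_atTop.1 ((hfw.def (half_pos hc)).and hw0)
  set W := fun t => ∫ x in a..t, w x
  filter_upwards [eventually_ge_atTop T,
    (hW.const_mul_atTop (half_pos hc)).eventually_ge_atTop (‖∫ x in a..T, f x‖ - c / 2 * W T)]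
    with t hTt hWt
  have tail : ‖∫ x in T..t, f x‖ ≤ c / 2 * (W t - W T) := by
    calc ‖∫ x in T..t, f x‖ ≤ ∫ x in T..t, c / 2 * w x :=
          norm_integral_le_of_norm_le hTt
            (.of_forall fun x hx => by
              simpa [abs_of_nonneg (hT x hx.1.le).2] using (hT x hx.1.le).1)
            ((hw T t).const_mul _)
      _ = c / 2 * (W t - W T) := by
          rw [integral_const_mul, integral_interval_sub_left (hw a t) (hw a T)]
  calc ‖∫ x in a..t, f x‖ = ‖(∫ x in a..T, f x) + ∫ x in T..t, f x‖ := by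
        rw [integral_add_adjacent_intervals (hf a T) (hf T t)]
    _ ≤ ‖∫ x in a..T, f x‖ + c / 2 * (W t - W T) := norm_add_le_of_le le_rfl tail
    _ ≤ c * W t := by linarith
    _ ≤ c * ‖W t‖ := by gcongr; exact Real.le_norm_self _

theorem tendsto_integral_exp_integral_mul_nhds_zero {μ g : ℝ → ℝ} {a : ℝ}
    (hμ : Continuous μ) (hg : Continuous g)
    (hint : Tendsto (fun t => ∫ s in a..t, μ s) atTop atBot) (hneg : ∀ᶠ t in atTop, μ t < 0)
    (hratio : Tendsto (fun t => g t / μ t) atTop (nhds 0)) :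
    Tendsto (fun t => ∫ τ in a..t, Real.exp (∫ s in τ..t, μ s) * g τ) atTop (nhds 0) := by
  set F := fun t => ∫ s in a..t, μ s
  have hF : ∀ x, HasDerivAt F (μ x) x := fun x => (hμ.integral_hasStrictDerivAt a x).hasDerivAt
  have hFc : Continuous F := continuous_iff_continuousAt.2 fun x => (hF x).continuousAt
  have conv_eq : ∀ t, ∫ τ in a..t, Real.exp (∫ s in τ..t, μ s) * g τ
      = Real.exp (F t) * ∫ τ in a..t, Real.exp (-F τ) * g τ := by
    intro t
    rw [← integral_const_mul]
    refine integral_congr fun τ _ => ?_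
    rw [← integral_interval_sub_left (hμ.intervalIntegrable a t) (hμ.intervalIntegrable a τ),
      sub_eq_add_neg, Real.exp_add, mul_assoc]
  have integral_weight : ∀ t, ∫ τ in a..t, -μ τ * Real.exp (-F τ) = Real.exp (-F t) - 1 := by
    intro t
    rw [integral_eq_sub_of_hasDerivAt (f' := fun τ => -μ τ * Real.exp (-F τ))
      (fun x _ => by simpa only [mul_comm] using (hF x).fun_neg.exp)
      ((by fun_prop : Continuous fun τ => -μ τ * Real.exp (-F τ)).intervalIntegrable a t)]
    simp [F]
  have hfw : (fun τ => Real.exp (-F τ) * g τ) =o[atTop] fun τ => -μ τ * Real.exp (-F τ) := by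
    refine (isLittleO_iff_tendsto' (hneg.mono fun t ht h => absurd h ?_)).2 ?_
    · exact mul_ne_zero (neg_ne_zero.2 ht.ne) (Real.exp_ne_zero _)
    · refine (neg_zero (G := ℝ) ▸ hratio.neg).congr' (hneg.mono fun t ht => ?_)
      field_simp
  have hexp : Tendsto (fun t => Real.exp (-F t)) atTop atTop :=
    Real.tendsto_exp_atTop.comp (tendsto_neg_atBot_atTop.comp hint)
  have hW : Tendsto (fun t => ∫ τ in a..t, -μ τ * Real.exp (-F τ)) atTop atTop := by
    simpa only [integral_weight, ← sub_eq_add_neg] using tendsto_atTop_add_const_right _ (-1) hexp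
  have hbig : (fun t => Real.exp (-F t) - 1) =O[atTop] fun t => Real.exp (-F t) :=
    IsBigO.of_bound 1 ((hexp.eventually_ge_atTop 1).mono fun t ht => by
      rw [Real.norm_of_nonneg (by linarith), Real.norm_of_nonneg (by linarith)]; linarith)
  have hlittle := ((hfw.intervalIntegral_atTop (a := a)
    (by fun_prop : Continuous fun τ => Real.exp (-F τ) * g τ).intervalIntegrable
    (by fun_prop : Continuous fun τ => -μ τ * Real.exp (-F τ)).intervalIntegrable
    (hneg.mono fun t ht => mul_nonneg (by linarith) (Real.exp_nonneg _)) hW).congr_right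
    integral_weight).trans_isBigO hbig
  refine hlittle.tendsto_div_nhds_zero.congr fun t => ?_
  rw [conv_eq, Real.exp_neg, div_inv_eq_mul, mul_comm]

theorem stmt_4_general (μ g : ℝ → ℝ)
    (hμc : ContinuousOn μ (Set.Ici (0 : ℝ)))
    (hgc : ContinuousOn g (Set.Ici (0 : ℝ)))
    (hint : Tendsto (fun t : ℝ => ∫ s in (0:ℝ)..t, μ s) atTop atBot)
    (hneg : ∃ T : ℝ, 0 ≤ T ∧ ∀ t : ℝ, T ≤ t → μ t < 0)
    (hratio : Tendsto (fun t : ℝ => g t / μ t) atTop (nhds 0)) :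
    Tendsto (fun t : ℝ => ∫ τ in (0:ℝ)..t, Real.exp (∫ s in τ..t, μ s) * g τ)
      atTop (nhds 0) := by
  obtain ⟨T, -, hT⟩ := hneg
  have hmax : Continuous fun s : ℝ => max 0 s := continuous_const.max continuous_id
  have key := tendsto_integral_exp_integral_mul_nhds_zero (a := 0)
    (hμc.comp_continuous hmax fun s => le_max_left 0 s)
    (hgc.comp_continuous hmax fun s => le_max_left 0 s)
    (hint.congr' ((eventually_ge_atTop 0).mono fun t ht =>
      (integral_comp_max_of_le μ le_rfl ht).symm))
    ((eventually_ge_atTop T).mono fun t ht => hT _ (ht.trans (le_max_right 0 t)))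
    (hratio.congr' ((eventually_ge_atTop 0).mono fun t ht => by simp [max_eq_right ht]))
  refine key.congr' ((eventually_ge_atTop 0).mono fun t ht => integral_congr fun τ hτ => ?_)
  have hτ : 0 ≤ τ := le_trans (le_min le_rfl ht) hτ.1
  simp only [Function.comp_apply, integral_comp_max_of_le μ hτ ht, max_eq_right hτ]

/-- the L'Hospital step: if `∫₀ᵗ μ → -∞`, `μ(t) < 0` eventually and
`g(t)/μ(t) → 0`, then the convolution term `∫₀ᵗ exp(∫_τ^t μ) g(τ) dτ → 0`. -/
theorem stmt_4 (μ g : ℝ → ℝ)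
    (hμc : ContinuousOn μ (Set.Ici (0 : ℝ)))
    (hgc : ContinuousOn g (Set.Ici (0 : ℝ)))
    (hg0 : ∀ t : ℝ, 0 ≤ t → 0 ≤ g t)
    (hint : Tendsto (fun t : ℝ => ∫ s in (0:ℝ)..t, μ s) atTop atBot)
    (hneg : ∃ T : ℝ, 0 ≤ T ∧ ∀ t : ℝ, T ≤ t → μ t < 0)
    (hratio : Tendsto (fun t : ℝ => g t / μ t) atTop (nhds 0)) :
    Tendsto (fun t : ℝ => ∫ τ in (0:ℝ)..t, Real.exp (∫ s in τ..t, μ s) * g τ)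
      atTop (nhds 0) :=
  stmt_4_general μ g hμc hgc hint hneg hratio
end

section
/- Let n ≥ 1, let A : [0,∞) → ℝ^{n×n} be continuous, and assume the zero solution of ẋ = A(t)x is globally uniformly exponentially stable, i.e. there exist K ≥ 1 and λ > 0 such that every differentiable x : [0,∞) → ℝⁿ with x′(t) = A(t)x(t) satisfies ‖x(t)‖ ≤ K·e^{-λ(t-τ)}·‖x(τ)‖ for all 0 ≤ τ ≤ t. Let h : [0,∞) → ℝⁿ be continuous with ∫_t^{t+1} ‖h(s)‖ ds → 0 as t → ∞ (i.e. h ∈ 𝒜𝒟). Then every differentiable x : [0,∞) → ℝⁿ with x′(t) = A(t)x(t) + h(t) for all t ≥ 0 satisfies ‖x(t)‖ → 0 as t → ∞. -/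
/-!
Let `Φ(t, s)` be the evolution of `ẏ = A(t) y`; solutions exist globally because the equation is
linear with continuous coefficients, so the stability hypothesis gives `‖Φ(t, s)‖ ≤ K`. Fix `t`.
Since `x(z) - Φ(z, s) x(s) = (z - s) h(s) + o(z - s)`, the curve `s ↦ Φ(t, s) x(s)` has right
Dini derivative at most `K ‖h(s)‖`, and Grönwall's inequality makes it continuous; comparing it
at `s = τ` and `s = t` gives `‖x t‖ ≤ K e^{-λ(t-τ)} ‖x τ‖ + K ∫_τ^t ‖h‖`. Pick `N` with
`K e^{-λN} ≤ 1/2`. Once all integrals of `‖h‖` over unit windows are below `η`, this says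
`‖x t‖ ≤ ‖x (t - N)‖ / 2 + K N η`, so eventually `‖x t‖ ≤ (1 + 2 K N) η`.
-/

open Filter Set Topology
open scoped NNReal

section RealAnalysis

variable {F : Type*} [NormedAddCommGroup F]

theorem continuousOn_of_norm_sub_le {g : ℝ → F} {ω : ℝ → ℝ} {s : Set ℝ} (hω : ContinuousAt ω 0)
    (hω₀ : ω 0 = 0) (hg : ∀ a ∈ s, ∀ b ∈ s, a ≤ b → ‖g b - g a‖ ≤ ω (b - a)) :
    ContinuousOn g s := by
  intro a ha
  rw [ContinuousWithinAt, tendsto_iff_norm_sub_tendsto_zero]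
  have hlim : Tendsto (fun b ↦ ω |b - a|) (𝓝[s] a) (𝓝 0) := by
    rw [← hω₀]
    refine (hω.tendsto.comp ?_).mono_left nhdsWithin_le_nhds
    simpa using ((continuous_id.sub (continuous_const (y := a))).abs.tendsto a)
  refine squeeze_zero' (Eventually.of_forall fun _ ↦ norm_nonneg _)
    (eventually_nhdsWithin_of_forall fun b hb ↦ ?_) hlim
  rcases le_total a b with hab | hba
  · simpa [abs_of_nonneg (sub_nonneg.2 hab)] using hg a ha b hb hab
  · simpa [norm_sub_rev, abs_of_nonpos (sub_nonpos.2 hba)] using hg b hb a ha hba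

theorem norm_sub_le_integral_of_frequently_lt {g : ℝ → F} {ψ : ℝ → ℝ} {a b : ℝ} (hab : a ≤ b)
    (hg : ContinuousOn g (Icc a b)) (hψ : ContinuousOn ψ (Icc a b))
    (hslope : ∀ s ∈ Ico a b, ∀ r, ψ s < r → ∃ᶠ z in 𝓝[>] s, (z - s)⁻¹ * ‖g z - g s‖ < r) :
    ‖g b - g a‖ ≤ ∫ u in a..b, ψ u := by
  have hint {s} (hs : s ∈ Icc a b) : IntervalIntegrable ψ MeasureTheory.volume a s :=
    (hψ.mono (by rw [uIcc_of_le hs.1]; exact Icc_subset_Icc_right hs.2)).intervalIntegrable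
  refine image_le_of_liminf_slope_right_le_deriv_boundary (f := fun s ↦ ‖g s - g a‖)
    (B := fun s ↦ ∫ u in a..s, ψ u) (B' := ψ)
    (hg.sub continuousOn_const).norm (by simp) ?_ (fun s hs ↦ ?_) (fun s hs r hr ↦ ?_)
    ⟨hab, le_rfl⟩
  · simpa [uIcc_of_le hab] using
      intervalIntegral.continuousOn_primitive_interval' (hint ⟨hab, le_rfl⟩) left_mem_uIcc
  · have : Fact (s ∈ Icc a b) := ⟨Ico_subset_Icc_self hs⟩
    exact (intervalIntegral.integral_hasDerivWithinAt_right (hint (Ico_subset_Icc_self hs))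
      (hψ.stronglyMeasurableAtFilter_nhdsWithin measurableSet_Icc s)
      (hψ s (Ico_subset_Icc_self hs))).mono_of_mem_nhdsWithin (Icc_mem_nhdsGE_of_mem hs)
  · refine (hslope s hs r hr).mp (eventually_nhdsWithin_of_forall fun z hz hlt ↦ ?_)
    rw [slope_def_field, div_eq_inv_mul]
    refine lt_of_le_of_lt ?_ hlt
    gcongr
    · exact (inv_pos.2 (sub_pos.2 hz)).le
    · simpa using norm_sub_norm_le (g z - g a) (g s - g a)

theorem frequently_inv_sub_mul_norm_sub_lt [NormedSpace ℝ F] {g φ : ℝ → F} {φ' : F} {s r : ℝ}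
    (hφ : HasDerivWithinAt φ φ' (Ici s) s) (hφs : φ s = 0)
    (hgφ : ∀ᶠ z in 𝓝[>] s, ‖g z - g s‖ ≤ ‖φ z‖) (hr : ‖φ'‖ < r) :
    ∃ᶠ z in 𝓝[>] s, (z - s)⁻¹ * ‖g z - g s‖ < r := by
  refine (hφ.liminf_right_slope_norm_le hr).mp ?_
  filter_upwards [hgφ, self_mem_nhdsWithin] with z hz hsz hlt
  rw [hφs, norm_zero, sub_zero] at hlt
  exact lt_of_le_of_lt (by gcongr; exact (inv_pos.2 (sub_pos.2 hsz)).le) hlt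

end RealAnalysis

section IntegralCurve

variable {E : Type*} [NormedAddCommGroup E] [NormedSpace ℝ E] {v : ℝ → E → E} {a b c : ℝ}

theorem IsIntegralCurveOn.exists_union_Icc {γ γ' : ℝ → E} (hγ : IsIntegralCurveOn γ v (Icc a b))
    (hγ' : IsIntegralCurveOn γ' v (Icc b c)) (hb : γ b = γ' b) (hab : a ≤ b) (hbc : b ≤ c) :
    ∃ σ : ℝ → E, IsIntegralCurveOn σ v (Icc a c) ∧ EqOn σ γ (Icc a b) ∧ EqOn σ γ' (Icc b c) := by
  let σ : ℝ → E := fun t ↦ if t ≤ b then γ t else γ' t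
  have hσγ : EqOn σ γ (Icc a b) := fun t ht ↦ if_pos ht.2
  have hσγ' : EqOn σ γ' (Icc b c) := fun t ht ↦ by
    rcases ht.1.eq_or_lt with rfl | hlt
    · simp [σ, hb]
    · simp [σ, hlt.not_ge]
  have piece : ∀ {γ₀ : ℝ → E} {p q : ℝ}, IsIntegralCurveOn γ₀ v (Icc p q) → EqOn σ γ₀ (Icc p q) →
      ∀ t, HasDerivWithinAt σ (v t (σ t)) (Icc p q) t := by
    intro γ₀ p q h₀ heq t
    by_cases ht : t ∈ Icc p q
    · rw [heq ht]
      exact (h₀ t ht).congr heq (heq ht)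
    · exact HasFDerivWithinAt.of_notMem_closure (by rwa [closure_Icc])
  refine ⟨σ, fun t _ ↦ ?_, hσγ, hσγ'⟩
  rw [← Icc_union_Icc_eq_Icc hab hbc]
  exact (piece hγ hσγ t).union (piece hγ' hσγ' t)

end IntegralCurve

section LinearODE

variable {F : Type*} [NormedAddCommGroup F] [NormedSpace ℝ F] {B : ℝ → F →L[ℝ] F}

theorem IsIntegralCurve.sub {y z : ℝ → F} (hy : IsIntegralCurve y (fun t ↦ B t))
    (hz : IsIntegralCurve z (fun t ↦ B t)) : IsIntegralCurve (y - z) (fun t ↦ B t) :=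
  fun t ↦ by simpa only [Pi.sub_apply, map_sub] using (hy t).sub (hz t)

theorem norm_sub_le_gronwallBound_of_hasDerivAt {h y z : ℝ → F} {a b M H : ℝ} (hab : a ≤ b)
    (hy : ∀ t ∈ Icc a b, HasDerivAt y (B t (y t) + h t) t)
    (hz : ∀ t ∈ Icc a b, HasDerivAt z (B t (z t)) t) (hyz : y a = z a)
    (hM : ∀ t ∈ Icc a b, ‖B t‖ ≤ M) (hH : ∀ t ∈ Icc a b, ‖h t‖ ≤ H) :
    ‖y b - z b‖ ≤ gronwallBound 0 M H (b - a) := by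
  have hd : ∀ t ∈ Icc a b, HasDerivAt (y - z) (B t (y t - z t) + h t) t :=
    fun t ht ↦ by simpa only [map_sub, add_sub_right_comm] using (hy t ht).sub (hz t ht)
  refine norm_le_gronwallBound_of_norm_deriv_right_le
    (fun t ht ↦ (hd t ht).continuousAt.continuousWithinAt)
    (fun t ht ↦ (hd t (Ico_subset_Icc_self ht)).hasDerivWithinAt) (by simp [hyz])
    (fun t ht ↦ ?_) b ⟨hab, le_rfl⟩
  have ht' := Ico_subset_Icc_self ht
  calc ‖B t (y t - z t) + h t‖ ≤ ‖B t‖ * ‖y t - z t‖ + ‖h t‖ :=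
        (norm_add_le _ _).trans (add_le_add_left ((B t).le_opNorm _) _)
    _ ≤ M * ‖y t - z t‖ + H := by gcongr <;> [exact hM t ht'; exact hH t ht']

variable [CompleteSpace F] {a b : ℝ}

theorem exists_isIntegralCurveOn_Icc_of_nnnorm_le {M : ℝ≥0} (hB : ContinuousOn B (Icc a b))
    (hM : ∀ t ∈ Icc a b, ‖B t‖₊ ≤ M) (hab : 2 * M * (b - a) ≤ 1) (t₀ : Icc a b) (v : F) :
    ∃ y : ℝ → F, y t₀ = v ∧ IsIntegralCurveOn y (fun t ↦ B t) (Icc a b) := by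
  -- on the ball of radius `‖v‖ + 1` around `v` the field is bounded by `M (2‖v‖ + 1)`, and
  -- `2 M (b - a) ≤ 1` keeps the solution inside that ball
  have hPL : IsPicardLindelof (fun t ↦ B t) t₀ v (‖v‖₊ + 1) 0 (M * (2 * ‖v‖₊ + 1)) M := by
    refine ⟨fun t ht ↦ ((B t).lipschitz.weaken (hM t ht)).lipschitzOnWith, fun x _ ↦
      hB.clm_apply continuousOn_const, fun t ht x hx ↦ ?_, ?_⟩
    · have hx' : ‖x‖ ≤ 2 * ‖v‖ + 1 := by
        have := norm_le_norm_add_norm_sub' x v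
        rw [Metric.mem_closedBall, dist_eq_norm] at hx
        push_cast at hx
        linarith
      calc ‖B t x‖ ≤ ‖B t‖ * ‖x‖ := (B t).le_opNorm x
        _ ≤ M * (2 * ‖v‖ + 1) := mul_le_mul (hM t ht) hx' (norm_nonneg _) M.2
    · push_cast
      have hmax : max (b - t₀) (t₀ - a) ≤ b - a := max_le (by linarith [t₀.2.1])
        (by linarith [t₀.2.2])
      have h0 : 0 ≤ max (b - t₀) (t₀ - a) := le_max_of_le_left (by linarith [t₀.2.2])
      have hv := norm_nonneg v
      calc (M : ℝ) * (2 * ‖v‖ + 1) * max (b - t₀) (t₀ - a)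
          ≤ (2 * ‖v‖ + 1) * (M * (b - a)) := by
            rw [mul_comm (M : ℝ), mul_assoc]
            gcongr
        _ ≤ ‖v‖ + 1 - 0 := by nlinarith
  exact hPL.exists_eq_forall_mem_Icc_hasDerivWithinAt₀

theorem IsIntegralCurveOn.exists_extend_Icc_of_nnnorm_le {M : ℝ≥0} {y : ℝ → F} {a' b' : ℝ}
    (hy : IsIntegralCurveOn y (fun t ↦ B t) (Icc a b)) (ha : a' ≤ a) (hab : a ≤ b) (hb : b ≤ b')
    (hB : ContinuousOn B (Icc a' b')) (hM : ∀ t ∈ Icc a' b', ‖B t‖₊ ≤ M)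
    (ha' : 2 * M * (a - a') ≤ 1) (hb' : 2 * M * (b' - b) ≤ 1) :
    ∃ y' : ℝ → F, IsIntegralCurveOn y' (fun t ↦ B t) (Icc a' b') ∧ EqOn y' y (Icc a b) := by
  obtain ⟨r, hr₀, hr⟩ := exists_isIntegralCurveOn_Icc_of_nnnorm_le
    (hB.mono (Icc_subset_Icc (ha.trans hab) le_rfl))
    (fun t ht ↦ hM t ⟨ha.trans (hab.trans ht.1), ht.2⟩) hb' ⟨b, left_mem_Icc.2 hb⟩ (y b)
  obtain ⟨z, hz, hzy, -⟩ := hy.exists_union_Icc hr hr₀.symm hab hb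
  obtain ⟨l, hl₀, hl⟩ := exists_isIntegralCurveOn_Icc_of_nnnorm_le
    (hB.mono (Icc_subset_Icc le_rfl (hab.trans hb)))
    (fun t ht ↦ hM t ⟨ht.1, ht.2.trans (hab.trans hb)⟩) ha' ⟨a, right_mem_Icc.2 ha⟩ (z a)
  obtain ⟨y', hy', -, hy'z⟩ := hl.exists_union_Icc hz hl₀ ha (hab.trans hb)
  exact ⟨y', hy', fun t ht ↦ (hy'z (Icc_subset_Icc_right hb ht)).trans (hzy ht)⟩

theorem IsIntegralCurveOn.exists_extend_Icc {y : ℝ → F} {a' b' : ℝ}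
    (hy : IsIntegralCurveOn y (fun t ↦ B t) (Icc a b)) (ha : a' ≤ a) (hab : a ≤ b) (hb : b ≤ b')
    (hB : ContinuousOn B (Icc a' b')) :
    ∃ y' : ℝ → F, IsIntegralCurveOn y' (fun t ↦ B t) (Icc a' b') ∧ EqOn y' y (Icc a b) := by
  obtain ⟨C, hC⟩ := isCompact_Icc.exists_bound_of_continuousOn hB
  have hM : ∀ t ∈ Icc a' b', ‖B t‖₊ ≤ C.toNNReal := fun t ht ↦ by
    rw [← NNReal.coe_le_coe, coe_nnnorm]
    exact (hC t ht).trans (Real.le_coe_toNNReal C)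
  set N : ℕ := ⌈2 * C.toNNReal * (b' - a')⌉₊ + 1
  have hN : (0 : ℝ) < N := by positivity
  have hMN : 2 * C.toNNReal * (b' - a') ≤ N := by
    simp only [N, Nat.cast_add, Nat.cast_one]; linarith [Nat.le_ceil (2 * C.toNNReal * (b' - a'))]
  set p := (a - a') / N
  set q := (b' - b) / N
  have hp : 0 ≤ p := div_nonneg (by linarith) hN.le
  have hq : 0 ≤ q := div_nonneg (by linarith) hN.le
  have hNp : N * p = a - a' := by simp only [p]; field_simp
  have hNq : N * q = b' - b := by simp only [q]; field_simp
  have hstep : 2 * C.toNNReal * p ≤ 1 ∧ 2 * C.toNNReal * q ≤ 1 := by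
    have hM0 : (0 : ℝ) ≤ C.toNNReal := NNReal.coe_nonneg _
    constructor <;> rw [← mul_le_mul_iff_of_pos_left hN] <;> nlinarith
  have key : ∀ j : ℕ, j ≤ N → ∃ y' : ℝ → F,
      IsIntegralCurveOn y' (fun t ↦ B t) (Icc (a - j * p) (b + j * q)) ∧ EqOn y' y (Icc a b) := by
    intro j hj
    induction j with
    | zero => exact ⟨y, by simpa using hy, fun _ _ ↦ rfl⟩
    | succ j ih =>
      obtain ⟨y', hy', hy'y⟩ := ih (by omega)
      have hjN : ((j + 1 : ℕ) : ℝ) ≤ N := by exact_mod_cast hj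
      push_cast at hjN ⊢
      obtain ⟨y'', hy'', hy''y'⟩ := hy'.exists_extend_Icc_of_nnnorm_le
        (a' := a - (j + 1) * p) (b' := b + (j + 1) * q) (by nlinarith) (by nlinarith) (by nlinarith)
        (hB.mono (Icc_subset_Icc (by nlinarith) (by nlinarith)))
        (fun t ht ↦ hM t ⟨by nlinarith [ht.1], by nlinarith [ht.2]⟩)
        (by nlinarith [hstep.1]) (by nlinarith [hstep.2])
      refine ⟨y'', hy'', fun t ht ↦ (hy''y' ⟨?_, ?_⟩).trans (hy'y ht)⟩ <;> nlinarith [ht.1, ht.2]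
  obtain ⟨y', hy', hy'y⟩ := key N le_rfl
  rw [hNp, hNq, sub_sub_cancel, add_sub_cancel] at hy'
  exact ⟨y', hy', hy'y⟩

theorem exists_isIntegralCurve_of_continuous (hB : Continuous B) (s : ℝ) (v : F) :
    ∃ y : ℝ → F, y s = v ∧ IsIntegralCurve y (fun t ↦ B t) := by
  let I : ℕ → Set ℝ := fun k ↦ Icc (s - k) (s + k)
  obtain ⟨y₀, hy₀s, hy₀⟩ := exists_isIntegralCurveOn_Icc_of_nnnorm_le (M := ‖B s‖₊)
    hB.continuousOn (fun t ht ↦ by rw [Icc_self, mem_singleton_iff] at ht; rw [ht]) (by simp)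
    ⟨s, left_mem_Icc.2 le_rfl⟩ v
  have hstep (k : ℕ) (y : ℝ → F) (hy : IsIntegralCurveOn y (fun t ↦ B t) (I k)) :
      ∃ y', IsIntegralCurveOn y' (fun t ↦ B t) (I (k + 1)) ∧ EqOn y' y (I k) :=
    hy.exists_extend_Icc (by push_cast; linarith) (by linarith [k.cast_nonneg (α := ℝ)])
      (by push_cast; linarith) hB.continuousOn
  choose extend hextend hextend_eq using hstep
  let seq (k : ℕ) : {y : ℝ → F // IsIntegralCurveOn y (fun t ↦ B t) (I k)} :=
    Nat.rec ⟨y₀, by simpa [I] using hy₀⟩ (fun k y ↦ ⟨extend k y.1 y.2, hextend k y.1 y.2⟩) k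
  have hseq_mono {k m : ℕ} (hkm : k ≤ m) : EqOn (seq m).1 (seq k).1 (I k) := by
    induction m, hkm using Nat.le_induction with
    | base => exact fun _ _ ↦ rfl
    | succ m hkm ih =>
      refine fun u hu ↦ (hextend_eq m _ _ ?_).trans (ih hu)
      exact Icc_subset_Icc (by gcongr) (by gcongr) hu
  have hmem (t : ℝ) : t ∈ Ioo (s - (⌈|t - s|⌉₊ + 1 : ℕ)) (s + (⌈|t - s|⌉₊ + 1 : ℕ)) := by
    have := (Nat.le_ceil |t - s|).trans_lt (lt_add_one _)
    push_cast
    constructor <;> linarith [neg_abs_le (t - s), le_abs_self (t - s)]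
  let y (t : ℝ) : F := (seq (⌈|t - s|⌉₊ + 1)).1 t
  have hy_eq (k : ℕ) : EqOn y (seq k).1 (I k) := fun u hu ↦
    ((hseq_mono (le_max_right k _) (Ioo_subset_Icc_self (hmem u))).symm.trans
      (hseq_mono (le_max_left _ _) hu))
  refine ⟨y, ?_, fun t ↦ ?_⟩
  · rw [hy_eq 0 (by simp [I]), ← hy₀s]
    rfl
  · have hI : I (⌈|t - s|⌉₊ + 1) ∈ 𝓝 t := Icc_mem_nhds (hmem t).1 (hmem t).2
    rw [hy_eq _ (mem_of_mem_nhds hI)]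
    exact ((seq _).2 t (mem_of_mem_nhds hI)).hasDerivAt hI |>.congr_of_eventuallyEq
      (eventually_of_mem hI (hy_eq _))

theorem norm_le_exp_mul_add_integral_of_hasDerivAt {h x : ℝ → F} {K lam τ t : ℝ} (hB : Continuous B)
    (hK : 0 ≤ K) (hlam : 0 ≤ lam)
    (hstab : ∀ y : ℝ → F, IsIntegralCurve y (fun t ↦ B t) → ∀ s t : ℝ, 0 ≤ s → s ≤ t →
      ‖y t‖ ≤ K * Real.exp (-lam * (t - s)) * ‖y s‖)
    (hh : ContinuousOn h (Ici 0)) (hx : ∀ t, 0 ≤ t → HasDerivAt x (B t (x t) + h t) t)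
    (hτ : 0 ≤ τ) (hτt : τ ≤ t) :
    ‖x t‖ ≤ K * Real.exp (-lam * (t - τ)) * ‖x τ‖ + K * ∫ u in τ..t, ‖h u‖ := by
  choose Y hYs hY using exists_isIntegralCurve_of_continuous hB
  have hsub : Icc τ t ⊆ Ici 0 := fun u hu ↦ hτ.trans hu.1
  -- `g s` is where the homogeneous flow takes `x s` from time `s` to time `t`
  set g : ℝ → F := fun s ↦ Y s (x s) t
  have hgap : ∀ s ∈ Icc τ t, ∀ s' ∈ Icc τ t, s ≤ s' →
      ‖g s' - g s‖ ≤ K * ‖x s' - Y s (x s) s'‖ := by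
    intro s hs s' hs' hss'
    have := hstab _ ((hY s' (x s')).sub (hY s (x s))) s' t (hsub hs') hs'.2
    simp only [Pi.sub_apply, hYs] at this
    refine this.trans (mul_le_mul_of_nonneg_right ?_ (norm_nonneg _))
    exact mul_le_of_le_one_right hK
      (Real.exp_le_one_iff.2 (by nlinarith [hs'.2]))
  have hcont : ContinuousOn g (Icc τ t) := by
    obtain ⟨M, hM⟩ := isCompact_Icc.exists_bound_of_continuousOn (hB.continuousOn (s := Icc τ t))
    obtain ⟨H, hH⟩ := isCompact_Icc.exists_bound_of_continuousOn (hh.mono hsub)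
    refine continuousOn_of_norm_sub_le (ω := fun r ↦ K * gronwallBound 0 M H r)
      ((hasDerivAt_gronwallBound 0 M H 0).continuousAt.const_mul K) (by simp [gronwallBound_x0])
      fun s hs s' hs' hss' ↦ (hgap s hs s' hs' hss').trans (mul_le_mul_of_nonneg_left ?_ hK)
    have hsub' : Icc s s' ⊆ Icc τ t := Icc_subset_Icc hs.1 hs'.2
    exact norm_sub_le_gronwallBound_of_hasDerivAt hss' (fun u hu ↦ hx u (hsub (hsub' hu)))
      (fun u _ ↦ hY s (x s) u) (hYs s (x s)).symm (fun u hu ↦ hM u (hsub' hu))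
      (fun u hu ↦ hH u (hsub' hu))
  have hslope : ∀ s ∈ Ico τ t, ∀ r, K * ‖h s‖ < r →
      ∃ᶠ z in 𝓝[>] s, (z - s)⁻¹ * ‖g z - g s‖ < r := by
    intro s hs r hr
    have hφ : HasDerivAt (K • (x - Y s (x s))) (K • h s) s := by
      simpa [hYs] using ((hx s (hsub (Ico_subset_Icc_self hs))).sub (hY s (x s) s)).const_smul K
    refine frequently_inv_sub_mul_norm_sub_lt hφ.hasDerivWithinAt (by simp [hYs]) ?_
      (by rwa [norm_smul, Real.norm_of_nonneg hK])
    filter_upwards [Ioc_mem_nhdsGT hs.2] with z hz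
    simpa [norm_smul, Real.norm_of_nonneg hK] using
      hgap s (Ico_subset_Icc_self hs) z ⟨hs.1.trans hz.1.le, hz.2⟩ hz.1.le
  have hint := norm_sub_le_integral_of_frequently_lt hτt hcont
    (ψ := fun u ↦ K * ‖h u‖) ((hh.mono hsub).norm.const_smul K) hslope
  calc ‖x t‖ = ‖g τ + (g t - g τ)‖ := by simp [g, hYs]
    _ ≤ ‖g τ‖ + ‖g t - g τ‖ := norm_add_le _ _
    _ ≤ K * Real.exp (-lam * (t - τ)) * ‖x τ‖ + K * ∫ u in τ..t, ‖h u‖ := by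
      rw [← intervalIntegral.integral_const_mul]
      gcongr
      simpa [g, hYs] using hstab _ (hY τ (x τ)) τ t hτ hτt

end LinearODE

section Asymptotics

theorem integral_le_nat_mul_of_forall_integral_le {f : ℝ → ℝ} {t₀ η τ t : ℝ} {N : ℕ}
    (hf₀ : ∀ u, 0 ≤ f u) (hf : ContinuousOn f (Ici t₀))
    (hη : ∀ s, t₀ ≤ s → ∫ u in s..s + 1, f u ≤ η) (hτ : t₀ ≤ τ) (hτt : τ ≤ t) (ht : t ≤ τ + N) :
    ∫ u in τ..t, f u ≤ N * η := by
  have hint {a b : ℝ} (ha : t₀ ≤ a) (hab : a ≤ b) : IntervalIntegrable f MeasureTheory.volume a b :=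
    (hf.mono fun u hu ↦ ha.trans (by rw [uIcc_of_le hab] at hu; exact hu.1)).intervalIntegrable
  have hsplit := intervalIntegral.sum_integral_adjacent_intervals (f := f) (a := fun k : ℕ ↦ τ + k)
    (n := N) fun k _ ↦ hint (by linarith [k.cast_nonneg (α := ℝ)]) (by push_cast; linarith)
  simp only [Nat.cast_zero, add_zero] at hsplit
  calc ∫ u in τ..t, f u ≤ ∫ u in τ..τ + N, f u :=
        intervalIntegral.integral_mono_interval le_rfl hτt ht
          (MeasureTheory.ae_of_all _ hf₀) (hint hτ (by linarith))
    _ = ∑ k ∈ Finset.range N, ∫ u in τ + k..τ + (k + 1 : ℕ), f u := hsplit.symm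
    _ ≤ ∑ _k ∈ Finset.range N, η := Finset.sum_le_sum fun k _ ↦ by
        simpa [add_assoc] using hη (τ + k) (by linarith [k.cast_nonneg (α := ℝ)])
    _ = N * η := by simp

theorem le_div_pow_add_of_le_half_add {u : ℝ → ℝ} {t₀ T C b : ℝ} (hT : 0 < T) (hC : 0 ≤ C)
    (hb : 0 ≤ b) (hbase : ∀ t ∈ Icc t₀ (t₀ + T), u t ≤ C)
    (hstep : ∀ t, t₀ + T ≤ t → u t ≤ u (t - T) / 2 + b) (m : ℕ) {t : ℝ} (ht : t₀ + m * T ≤ t) :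
    u t ≤ C / 2 ^ m + 2 * b := by
  have hbound (n : ℕ) : ∀ t ∈ Icc t₀ (t₀ + n * T), u t ≤ C + 2 * b := by
    induction n with
    | zero =>
      intro t ht
      rw [Nat.cast_zero, zero_mul, add_zero] at ht
      exact (hbase t ⟨ht.1, by linarith [ht.2]⟩).trans (by linarith)
    | succ n ih =>
      intro t ht
      rcases le_or_gt t (t₀ + T) with htT | htT
      · exact (hbase t ⟨ht.1, htT⟩).trans (by linarith)
      · have := ih (t - T) ⟨by linarith, by push_cast at ht; linarith [ht.2]⟩
        linarith [hstep t htT.le]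
  induction m generalizing t with
  | zero =>
    obtain ⟨n, hn⟩ := exists_nat_ge ((t - t₀) / T)
    rw [div_le_iff₀ hT] at hn
    simpa using hbound n t ⟨by simpa using ht, by linarith⟩
  | succ m ih =>
    have := ih (t := t - T) (by push_cast at ht; linarith)
    calc u t ≤ u (t - T) / 2 + b := hstep t (by push_cast at ht; nlinarith [m.cast_nonneg (α := ℝ)])
      _ ≤ (C / 2 ^ m + 2 * b) / 2 + b := by gcongr
      _ = C / 2 ^ (m + 1) + 2 * b := by ring

theorem eventually_norm_le_of_norm_le_exp_mul_add_integral {E G : Type*} [NormedAddCommGroup E]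
    [NormedAddCommGroup G] {x : ℝ → E} {h : ℝ → G} {K lam η : ℝ} {N : ℕ} (hK : 0 ≤ K)
    (hlam : 0 ≤ lam) (hN : 0 < N) (hNK : K * Real.exp (-lam * N) ≤ 1 / 2)
    (hh : ContinuousOn h (Ici 0))
    (hAD : Tendsto (fun t ↦ ∫ s in t..t + 1, ‖h s‖) atTop (𝓝 0))
    (hest : ∀ τ t : ℝ, 0 ≤ τ → τ ≤ t →
      ‖x t‖ ≤ K * Real.exp (-lam * (t - τ)) * ‖x τ‖ + K * ∫ u in τ..t, ‖h u‖) (hη : 0 < η) :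
    ∀ᶠ t in atTop, ‖x t‖ ≤ (1 + 2 * K * N) * η := by
  obtain ⟨t₁, ht₁⟩ := eventually_atTop.1 (hAD.eventually (eventually_le_nhds hη))
  set t₀ := max t₁ 0
  have hwindow {τ t : ℝ} (hτ : t₀ ≤ τ) (hτt : τ ≤ t) (ht : t ≤ τ + N) :
      ∫ u in τ..t, ‖h u‖ ≤ N * η :=
    integral_le_nat_mul_of_forall_integral_le (fun _ ↦ norm_nonneg _)
      (hh.norm.mono (Ici_subset_Ici.2 (le_max_right _ _)))
      (fun s hs ↦ ht₁ s ((le_max_left _ _).trans hs)) hτ hτt ht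
  have hbase : ∀ t ∈ Icc t₀ (t₀ + N), ‖x t‖ ≤ K * ‖x t₀‖ + K * (N * η) := by
    intro t ht
    have hexp : Real.exp (-lam * (t - t₀)) ≤ 1 := Real.exp_le_one_iff.2 (by nlinarith [ht.1])
    calc ‖x t‖ ≤ K * Real.exp (-lam * (t - t₀)) * ‖x t₀‖ + K * ∫ u in t₀..t, ‖h u‖ :=
          hest t₀ t (le_max_right _ _) ht.1
      _ ≤ K * 1 * ‖x t₀‖ + K * (N * η) := by
          gcongr
          exact hwindow le_rfl ht.1 ht.2
      _ = K * ‖x t₀‖ + K * (N * η) := by ring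
  have hstep : ∀ t, t₀ + N ≤ t → ‖x t‖ ≤ ‖x (t - N)‖ / 2 + K * (N * η) := by
    intro t ht
    calc ‖x t‖ ≤ K * Real.exp (-lam * (t - (t - N))) * ‖x (t - N)‖
          + K * ∫ u in t - N..t, ‖h u‖ :=
          hest (t - N) t (by linarith [le_max_right t₁ 0]) (by linarith)
      _ ≤ 1 / 2 * ‖x (t - N)‖ + K * (N * η) := by
          rw [sub_sub_cancel]
          gcongr
          exact hwindow (by linarith) (by linarith) (by linarith)
      _ = ‖x (t - N)‖ / 2 + K * (N * η) := by ring
  obtain ⟨m, hm⟩ : ∃ m : ℕ, (K * ‖x t₀‖ + K * (N * η)) / 2 ^ m ≤ η :=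
    ((tendsto_const_nhds.div_atTop (tendsto_pow_atTop_atTop_of_one_lt one_lt_two)).eventually
      (eventually_le_nhds hη)).exists
  filter_upwards [eventually_ge_atTop (t₀ + m * N)] with t ht
  have := le_div_pow_add_of_le_half_add (by exact_mod_cast hN) (by positivity) (by positivity)
    hbase hstep m ht
  linarith

theorem tendsto_norm_zero_of_norm_le_exp_mul_add_integral {E G : Type*} [NormedAddCommGroup E]
    [NormedAddCommGroup G] {x : ℝ → E} {h : ℝ → G} {K lam : ℝ} (hK : 0 ≤ K) (hlam : 0 < lam)
    (hh : ContinuousOn h (Ici 0))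
    (hAD : Tendsto (fun t ↦ ∫ s in t..t + 1, ‖h s‖) atTop (𝓝 0))
    (hest : ∀ τ t : ℝ, 0 ≤ τ → τ ≤ t →
      ‖x t‖ ≤ K * Real.exp (-lam * (t - τ)) * ‖x τ‖ + K * ∫ u in τ..t, ‖h u‖) :
    Tendsto (fun t ↦ ‖x t‖) atTop (𝓝 0) := by
  obtain ⟨N, hN, hNK⟩ : ∃ N : ℕ, 0 < N ∧ K * Real.exp (-lam * N) ≤ 1 / 2 := by
    have : Tendsto (fun N : ℕ ↦ K * Real.exp (-lam * N)) atTop (𝓝 0) := by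
      simpa [neg_mul] using (Real.tendsto_exp_neg_atTop_nhds_zero.comp
        (tendsto_natCast_atTop_atTop.const_mul_atTop hlam)).const_mul K
    exact ((eventually_gt_atTop 0).and (this.eventually (eventually_le_nhds one_half_pos))).exists
  have hc : 0 < 1 + 2 * K * N := by positivity
  refine tendsto_order.2 ⟨fun a ha ↦ Eventually.of_forall fun t ↦ ha.trans_le (norm_nonneg _),
    fun ε hε ↦ ?_⟩
  filter_upwards [eventually_norm_le_of_norm_le_exp_mul_add_integral hK hlam.le hN hNK hh hAD hest
    (η := ε / (2 * (1 + 2 * K * N))) (by positivity)] with t ht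
  calc ‖x t‖ ≤ (1 + 2 * K * N) * (ε / (2 * (1 + 2 * K * N))) := ht
    _ = ε / 2 := by field_simp
    _ < ε := half_lt_self hε

end Asymptotics

theorem stmt_10_general (n : ℕ)
    (A : ℝ → Matrix (Fin n) (Fin n) ℝ)
    (hA : ContinuousOn A (Set.Ici (0 : ℝ)))
    (K lam : ℝ) (hK : 1 ≤ K) (hlam : 0 < lam)
    (hstab : ∀ y : ℝ → EuclideanSpace ℝ (Fin n),
      (∀ t : ℝ, 0 ≤ t → HasDerivAt y (Matrix.toEuclideanLin (A t) (y t)) t) →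
      ∀ τ t : ℝ, 0 ≤ τ → τ ≤ t →
        ‖y t‖ ≤ K * Real.exp (-lam * (t - τ)) * ‖y τ‖)
    (h : ℝ → EuclideanSpace ℝ (Fin n))
    (hc : ContinuousOn h (Set.Ici (0 : ℝ)))
    (hAD : Tendsto (fun t : ℝ => ∫ s in t..(t + 1), ‖h s‖) atTop (nhds 0))
    (x : ℝ → EuclideanSpace ℝ (Fin n))
    (hx : ∀ t : ℝ, 0 ≤ t →
      HasDerivAt x (Matrix.toEuclideanLin (A t) (x t) + h t) t) :
    Tendsto (fun t : ℝ => ‖x t‖) atTop (nhds 0) := by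
  -- extend `A` to negative times so that its flow is defined on all of `ℝ`
  let B (t : ℝ) := Matrix.toEuclideanCLM (𝕜 := ℝ) (A (max t 0))
  have hB : Continuous B :=
    (LinearMap.continuous_of_finiteDimensional
      (Matrix.toEuclideanCLM (n := Fin n) (𝕜 := ℝ)).toAlgEquiv.toLinearMap).comp
      (hA.comp_continuous (continuous_id.max continuous_const) fun t ↦ le_max_right t 0)
  have hBA {t : ℝ} (ht : 0 ≤ t) (v) : B t v = Matrix.toEuclideanLin (A t) v := by
    simp only [B, max_eq_left ht]
    rfl
  refine tendsto_norm_zero_of_norm_le_exp_mul_add_integral (by linarith) hlam hc hAD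
    fun τ t hτ hτt ↦ norm_le_exp_mul_add_integral_of_hasDerivAt hB (by linarith) hlam.le
      (fun y hy ↦ hstab y fun t ht ↦ hBA ht (y t) ▸ hy t) hc
      (fun t ht ↦ hBA ht (x t) ▸ hx t ht) hτ hτt

/-- if the zero solution of `ẋ = A(t)x` is globally uniformly
exponentially stable and `h ∈ 𝒜𝒟`, then every solution of the perturbed system
`ẋ = A(t)x + h(t)` tends to `0`. -/
theorem stmt_10 (n : ℕ) (hn : 1 ≤ n)
    (A : ℝ → Matrix (Fin n) (Fin n) ℝ)
    (hA : ContinuousOn A (Set.Ici (0 : ℝ)))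
    (K lam : ℝ) (hK : 1 ≤ K) (hlam : 0 < lam)
    (hstab : ∀ y : ℝ → EuclideanSpace ℝ (Fin n),
      (∀ t : ℝ, 0 ≤ t → HasDerivAt y (Matrix.toEuclideanLin (A t) (y t)) t) →
      ∀ τ t : ℝ, 0 ≤ τ → τ ≤ t →
        ‖y t‖ ≤ K * Real.exp (-lam * (t - τ)) * ‖y τ‖)
    (h : ℝ → EuclideanSpace ℝ (Fin n))
    (hc : ContinuousOn h (Set.Ici (0 : ℝ)))
    (hAD : Tendsto (fun t : ℝ => ∫ s in t..(t + 1), ‖h s‖) atTop (nhds 0))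
    (x : ℝ → EuclideanSpace ℝ (Fin n))
    (hx : ∀ t : ℝ, 0 ≤ t →
      HasDerivAt x (Matrix.toEuclideanLin (A t) (x t) + h t) t) :
    Tendsto (fun t : ℝ => ‖x t‖) atTop (nhds 0) :=
  stmt_10_general n A hA K lam hK hlam hstab h hc hAD x hx
end
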